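/- Let θ ∈ (0,1), p ∈ (1/2,1], K a finite set, and for each k ∈ K let a_k ∈ [0,1], ε_k ∈ [0,1], and p_k ∈ [1/2,1]. If there exists k ∈ K with a_k·ε_k > 0 and p_k > 1/2, then Σ_{k∈K} a_k·ε_k·f(p,p_k) > 0, and consequently for every δ ∈ [0,1): δ·Σ_{k∈K} a_k·ε_k·f(p,p_k) < Σ_{k∈K} a_k·ε_k·f(p,p_k). (Lemma 2: an agent mixing between full-effort truthtelling with probability δ and a random report has a strictly profitable deviation to δ = 1 whenever some possible reference rater plays full-effort truthtelling with positive probability and proficiency above 1/2.) -/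
import Mathlib


/-- Probability of observing H when evaluating with proficiency `p`, given prior `θ` on H. -/
noncomputable def obsH (θ p : ℝ) : ℝ := p * θ + (1 - p) * (1 - θ)

/-- The function `f_α(p,q)`. -/
noncomputable def fAlpha (θ α p q : ℝ) : ℝ :=
  p * q + (1 - p) * (1 - q) -
    α * (obsH θ p * obsH θ q + (1 - obsH θ p) * (1 - obsH θ q))

/-- `f(p,q) := f_1(p,q)`. -/
noncomputable def fPQ (θ p q : ℝ) : ℝ := fAlpha θ 1 p q
lemma fPQ_eq (θ p q : ℝ) : fPQ θ p q = (2*p-1)*(2*q-1)*(1-(2*θ-1)^2)/2 := by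
  unfold fPQ fAlpha obsH; ring

/-- Lemma 2: if some possible reference rater `k` is chosen with positive probability
`a_k`, plays full-effort truthtelling with positive probability `ε_k`, and has
proficiency `p_k > 1/2`, then `Σ_k a_k ε_k f(p,p_k) > 0`, so an agent mixing with
probability `δ < 1` on full-effort truthtelling strictly gains by moving to `δ = 1`. -/
theorem stmt12 (θ p : ℝ) (hθ : θ ∈ Set.Ioo (0 : ℝ) 1)
    (hp : p ∈ Set.Ioc (1 / 2 : ℝ) 1)
    (K : Type) [Fintype K] (a ε pk : K → ℝ)
    (ha : ∀ k, a k ∈ Set.Icc (0 : ℝ) 1) (hε : ∀ k, ε k ∈ Set.Icc (0 : ℝ) 1)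
    (hpk : ∀ k, pk k ∈ Set.Icc (1 / 2 : ℝ) 1)
    (hex : ∃ k, 0 < a k * ε k ∧ 1 / 2 < pk k) :
    0 < ∑ k, a k * ε k * fPQ θ p (pk k) ∧
    ∀ δ ∈ Set.Ico (0 : ℝ) 1,
      δ * ∑ k, a k * ε k * fPQ θ p (pk k) <
        ∑ k, a k * ε k * fPQ θ p (pk k) := by
  have hθfac : 0 < 1 - (2*θ-1)^2 := by nlinarith [hθ.1, hθ.2]
  have hpos : 0 < ∑ k, a k * ε k * fPQ θ p (pk k) := by
    obtain ⟨k0, hk0, hpk0⟩ := hex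
    refine Finset.sum_pos' ?_ ⟨k0, Finset.mem_univ k0, ?_⟩
    · intro k _
      have h1 := (ha k).1; have h2 := (hε k).1; have h3 := (hpk k).1
      rw [fPQ_eq]
      have hX : 0 ≤ (2*p-1)*(2*(pk k)-1)*(1-(2*θ-1)^2)/2 := by
        apply div_nonneg _ (by norm_num)
        exact mul_nonneg (mul_nonneg (by linarith [hp.1]) (by linarith)) hθfac.le
      exact mul_nonneg (mul_nonneg h1 h2) hX
    · rw [fPQ_eq]
      apply mul_pos hk0
      apply div_pos _ (by norm_num)
      exact mul_pos (mul_pos (by linarith [hp.1]) (by linarith)) hθfac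
  refine ⟨hpos, fun δ hδ => ?_⟩
  nlinarith [hδ.1, hδ.2, hpos]
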